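/- For polynomials f₁,…,f_d in one variable, f₁(x₁) ⋆_K ⋯ ⋆_K f_d(x_d) = Σ_{k≥0} (ℏ^k/k!) Σ_{deg M = 2k} (k choose m₁₂,…,m_{d−1,d}) f₁^{(α₁)}(x₁)⋯f_d^{(α_d)}(x_d) Π_{i<j} K_{ij}^{m_{ij}}, where the inner sum is over all d×d adjacency matrices M with deg M = 2k and α_i = Σ_j m_{ij}. -/

import Mathlib

/- Statement 7: for one-variable polynomials `f₁,…,f_d`,
`f₁(x₁) ⋆_K ⋯ ⋆_K f_d(x_d) = exp{ℏ Σ_{i<j} K_{ij} ∂_i∂_j}(f₁⋯f_d)`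
equals `Σ_{k≥0} (ℏ^k/k!) Σ_{deg M = 2k} (k choose m₁₂,…,m_{d−1,d})
f₁^{(α₁)}(x₁)⋯f_d^{(α_d)}(x_d) Π_{i<j} K_{ij}^{m_{ij}}`, the inner sum over all
`d×d` adjacency matrices of degree `2k` (parameterized by their
upper-triangular parts, functions supported on `{p | p.1 < p.2}` summing to
`k`) and `α_i = Σ_j m_{ij}`. -/

open MvPolynomial

noncomputable section

variable {R : Type} [CommRing R] [Algebra ℚ R]

/-- the finset of pairs `i < j`. -/
def pairs (d : ℕ) : Finset (Fin d × Fin d) :=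
  Finset.univ.filter (fun p : Fin d × Fin d => p.1 < p.2)

/-- the operator `Σ_{i<j} K_{ij} ∂_i ∂_j`. -/
def Lop {d : ℕ} (K : Fin d → Fin d → R) :
    Module.End R (MvPolynomial (Fin d) R) :=
  ∑ p ∈ pairs d, K p.1 p.2 • ((pderiv p.1).toLinearMap ∘ₗ (pderiv p.2).toLinearMap)

/-- the row sums `α_i = Σ_j m_{ij}` of the adjacency matrix with
upper-triangular part `M`. -/
def rowSum {d : ℕ} (M : Fin d × Fin d → ℕ) (i : Fin d) : ℕ :=
  ∑ j : Fin d, (if i < j then M (i, j) else if j < i then M (j, i) else 0)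

/-- the multiple star product
`f₁(x₁) ⋆_K ⋯ ⋆_K f_d(x_d) = exp{ℏ Σ_{i<j} K_{ij} ∂_i∂_j}(f₁(x₁)⋯f_d(x_d))`. -/
def multiStar {d : ℕ} (ℏ : R) (K : Fin d → Fin d → R)
    (f : Fin d → Polynomial R) : MvPolynomial (Fin d) R :=
  finsum fun n : ℕ =>
    (n.factorial : ℚ)⁻¹ •
      (ℏ ^ n • ((Lop K ^ n) (∏ i : Fin d, Polynomial.aeval (X i) (f i))))

/-! Each summand `K_{ij} ∂_i ∂_j` of the exponent maps `f₁^{(α₁)}(x₁)⋯f_d^{(α_d)}(x_d)` to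
`K_{ij}` times the same product with `α_i` and `α_j` raised by one, because `∂_i` only sees the
factor in `x_i`. These summands commute, so by the multinomial theorem
`(Σ_{i<j} K_{ij} ∂_i ∂_j)^k` is the sum over `M` of total weight `k` of
`(k choose M) Π_{i<j} (K_{ij} ∂_i ∂_j)^{m_{ij}}`, and that product raises each `α_i` by the
row sum `Σ_j m_{ij}`. -/

section

open scoped Function

variable {ι S κ N : Type*} [CommSemiring S] [AddCommMonoid κ] [AddCommMonoid N] [Module S N]

theorem Module.End.pow_apply_of_forall_apply_eq_smul (T : Module.End S N) (F : κ → N) (c : S)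
    (v : κ) (hT : ∀ α, T (F α) = c • F (α + v)) (m : ℕ) (α : κ) :
    (T ^ m) (F α) = c ^ m • F (α + m • v) := by
  induction m with
  | zero => simp
  | succ m ih => rw [pow_succ', Module.End.mul_apply, ih, map_smul, hT, smul_smul, add_assoc,
      ← succ_nsmul, pow_succ]

theorem Finset.noncommProd_apply_of_forall_apply_eq_smul (s : Finset ι) (T : ι → Module.End S N)
    (hcomm : (s : Set ι).Pairwise (Commute on T)) (F : κ → N) (c : ι → S) (v : ι → κ)
    (hT : ∀ i ∈ s, ∀ α, T i (F α) = c i • F (α + v i)) (α : κ) :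
    s.noncommProd T hcomm (F α) = (∏ i ∈ s, c i) • F (α + ∑ i ∈ s, v i) := by
  induction s using Finset.cons_induction with
  | empty => simp
  | cons a s ha ih =>
    rw [Finset.noncommProd_cons, Module.End.mul_apply,
      ih (hcomm.mono (Finset.coe_subset.mpr (Finset.subset_cons ha)))
        fun i hi => hT i (Finset.mem_cons_of_mem hi), map_smul,
      hT a (Finset.mem_cons_self a s), smul_smul, Finset.prod_cons, Finset.sum_cons, mul_comm,
      add_assoc, add_comm (∑ i ∈ s, v i)]

end

namespace MvPolynomial

theorem pderiv_pderiv_comm {S σ : Type*} [CommRing S] (i j : σ) (p : MvPolynomial σ S) :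
    pderiv i (pderiv j p) = pderiv j (pderiv i p) := by
  classical
  have hbracket : ⁅pderiv i, pderiv j⁆ = (0 : Derivation S (MvPolynomial σ S) _) :=
    derivation_ext fun k => by
      rw [Derivation.commutator_apply]
      simp [pderiv_X, Pi.single_apply, apply_ite]
  rw [← sub_eq_zero, ← Derivation.commutator_apply, hbracket, Derivation.zero_apply]

theorem commute_smul_pderiv_comp {S σ : Type*} [CommRing S] (a b : S) (i j k l : σ) :
    Commute
      (a • ((pderiv i).toLinearMap ∘ₗ (pderiv j).toLinearMap : Module.End S (MvPolynomial σ S)))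
      (b • ((pderiv k).toLinearMap ∘ₗ (pderiv l).toLinearMap)) := by
  have h (i j : σ) : Commute ((pderiv i).toLinearMap : Module.End S (MvPolynomial σ S))
      (pderiv j).toLinearMap :=
    LinearMap.ext (pderiv_pderiv_comm i j)
  exact (((h i k).mul_right (h i l)).mul_left ((h j k).mul_right (h j l))).smul_left a
    |>.smul_right b

section

variable {S σ : Type*} [CommSemiring S] [Fintype σ]

/-- `f₁^{(α₁)}(x₁)⋯f_d^{(α_d)}(x_d)` -/
def iterDerivProd (f : σ → Polynomial S) (α : σ → ℕ) : MvPolynomial σ S :=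
  ∏ j, Polynomial.aeval (X j) (Polynomial.derivative^[α j] (f j))

theorem pderiv_iterDerivProd [DecidableEq σ] (f : σ → Polynomial S) (α : σ → ℕ) (i : σ) :
    pderiv i (iterDerivProd f α) = iterDerivProd f (α + Pi.single i 1) := by
  have hconst : pderiv i (∏ j ∈ {i}ᶜ, Polynomial.aeval (X j)
      (Polynomial.derivative^[α j] (f j)) : MvPolynomial σ S) = 0 :=
    Finset.prod_induction _ (fun q => pderiv i q = 0) (fun a b ha hb => by simp [ha, hb])
      pderiv_one fun j hj => by simp [(by simpa using hj : j ≠ i)]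
  have hrest : ∏ j ∈ {i}ᶜ, Polynomial.aeval (X j : MvPolynomial σ S)
      (Polynomial.derivative^[(α + Pi.single i 1 : σ → ℕ) j] (f j)) =
      ∏ j ∈ {i}ᶜ, Polynomial.aeval (X j) (Polynomial.derivative^[α j] (f j)) :=
    Finset.prod_congr rfl fun j hj => by simp [(by simpa using hj : j ≠ i)]
  rw [iterDerivProd, iterDerivProd, Fintype.prod_eq_mul_prod_compl i,
    Fintype.prod_eq_mul_prod_compl i, pderiv_mul, hconst, hrest]
  simp [Function.iterate_succ_apply']

theorem smul_pderiv_comp_apply_iterDerivProd [DecidableEq σ] (a : S) (i j : σ)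
    (f : σ → Polynomial S) (α : σ → ℕ) :
    (a • ((pderiv i).toLinearMap ∘ₗ (pderiv j).toLinearMap)) (iterDerivProd f α) =
      a • iterDerivProd f (α + (Pi.single i 1 + Pi.single j 1)) := by
  simp [pderiv_iterDerivProd, add_assoc, add_comm (Pi.single j 1 : σ → ℕ)]

end

end MvPolynomial

theorem rowSum_eq_sum_pairs {d : ℕ} (M : Fin d × Fin d → ℕ) :
    rowSum M = ∑ p ∈ pairs d, M p • (Pi.single p.1 1 + Pi.single p.2 1 : Fin d → ℕ) := by
  funext i
  have hsplit : ∀ j, (if i < j then M (i, j) else if j < i then M (j, i) else 0) =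
      (if i < j then M (i, j) else 0) + (if j < i then M (j, i) else 0) := fun j => by
    by_cases h : i < j
    · simp [h, h.not_gt]
    · simp [h]
  have hterm : ∀ x y : Fin d,
      (if x < y then M (x, y) * (Pi.single x 1 + Pi.single y 1 : Fin d → ℕ) i else 0) =
      (if i = x then (if i < y then M (i, y) else 0) else 0) +
        (if i = y then (if x < i then M (x, i) else 0) else 0) := fun x y => by
    by_cases hx : i = x <;> by_cases hy : i = y <;> subst_vars <;> simp [*]
  simp only [rowSum, hsplit, Finset.sum_add_distrib, pairs, Finset.sum_apply, Finset.sum_filter,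
    Fintype.sum_prod_type, Pi.smul_apply, smul_eq_mul, hterm]
  rw [Finset.sum_comm (f := fun x y => if i = y then _ else 0)]
  simp

omit [Algebra ℚ R] in
theorem Lop_pow_apply_iterDerivProd_zero {d : ℕ} (K : Fin d → Fin d → R)
    (f : Fin d → Polynomial R) (n : ℕ) :
    (Lop K ^ n) (iterDerivProd f 0) =
      ∑ M ∈ Finset.piAntidiag (pairs d) n, Nat.multinomial (pairs d) M •
        (iterDerivProd f (rowSum M) * ∏ p ∈ pairs d, C (K p.1 p.2) ^ M p) := by
  rw [Lop, Finset.sum_pow_eq_sum_piAntidiag_of_commute _ _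
    (fun p _ q _ _ => commute_smul_pderiv_comp _ _ _ _ _ _), LinearMap.sum_apply]
  refine Finset.sum_congr rfl fun M _ => ?_
  rw [Module.End.mul_apply, Module.End.natCast_apply,
    Finset.noncommProd_apply_of_forall_apply_eq_smul _ _ _ _ (fun p => K p.1 p.2 ^ M p)
      (fun p => M p • (Pi.single p.1 1 + Pi.single p.2 1))
      (fun p _ => Module.End.pow_apply_of_forall_apply_eq_smul _ _ _ _
        (smul_pderiv_comp_apply_iterDerivProd _ _ _ f) _),
    zero_add, ← rowSum_eq_sum_pairs, smul_eq_C_mul, map_prod, mul_comm]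
  simp only [map_pow]

/-- the explicit adjacency-matrix expansion of the multiple
star product. -/
theorem multiStar_eq_sum_adjacency {d : ℕ} (ℏ : R) (K : Fin d → Fin d → R)
    (f : Fin d → Polynomial R) :
    multiStar ℏ K f =
      finsum fun k : ℕ =>
        (k.factorial : ℚ)⁻¹ •
          (ℏ ^ k •
            ∑ M ∈ Finset.piAntidiag (pairs d) k,
              Nat.multinomial (pairs d) M •
                ((∏ i : Fin d,
                    Polynomial.aeval (X i) (Polynomial.derivative^[rowSum M i] (f i))) *
                  ∏ p ∈ pairs d, C (K p.1 p.2) ^ M p)) :=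
  finsum_congr fun n => congrArg (fun x => (n.factorial : ℚ)⁻¹ • ℏ ^ n • x)
    (Lop_pow_apply_iterDerivProd_zero K f n)

end
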